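/- Proposition 3, second group. Let M ≥ 1, N ≥ 2 be integers and let ν be an integer with M+2 ≤ ν ≤ M+N. Set P_R = Π_{j=M+1}^{ν−2} (w_j − q w_{j+1}')(q w_j' − w_{j+1}) and S_R = 2^{−(ν−M−1)} Π_{j=M+1}^{ν−1} (w_j − q² w_j')(w_j' − w_j). Then, with respect to the pairs (w_{M+1}, w_{M+1}'), …, (w_{ν−1}, w_{ν−1}'), all carrying the fermionic exchange factor H^f, the following weak equalities hold: P_R (w_{ν−1} − q² w_{ν−1}') ∼ 0; w_{M+1} P_R (w_{ν−1} − q² w_{ν−1}') ∼ −S_R; w_{M+1}' P_R (w_{ν−1} − q² w_{ν−1}') ∼ S_R; (w_{M+1} − q² w_{M+1}') P_R ∼ 0; (w_{M+1} − q² w_{M+1}') P_R w_{ν−1} ∼ −S_R; and (w_{M+1} − q² w_{M+1}') P_R w_{ν−1}' ∼ S_R. -/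

import Mathlib

/-- Bosonic exchange factor `H^b(u,v) = -(q²v - u)/(q²u - v)`. -/
noncomputable def Hb (q u v : ℂ) : ℂ := -(q ^ 2 * v - u) / (q ^ 2 * u - v)

/-- Fermionic exchange factor `H^f(u,v) = -(q²u - v)/(q²v - u)`. -/
noncomputable def Hf (q u v : ℂ) : ℂ := -(q ^ 2 * u - v) / (q ^ 2 * v - u)

/-- Exchange factor assignment for `U_q(sl^(M|N))`: bosonic for `j < M`,
the constant `-1` for `j = M`, fermionic for `j > M`. -/
noncomputable def Hex (M : ℕ) (q : ℂ) (j : ℕ) : ℂ → ℂ → ℂ :=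
  if j < M then Hb q else if j = M then fun _ _ => -1 else Hf q

/-- Interchange `w_j` and `w_j'` for every `j ∈ σ`. -/
def swapOn (σ : Finset ℕ) (w w' : ℕ → ℂ) : ℕ → ℂ := fun j => if j ∈ σ then w' j else w j

/-- Weak equality `F ∼ G` with respect to the pairs `(w_j, w_j')`, `j ∈ J`,
carrying exchange factors `H j`. -/
def WeakEq (J : Finset ℕ) (H : ℕ → ℂ → ℂ → ℂ) (w w' : ℕ → ℂ)
    (F G : (ℕ → ℂ) → (ℕ → ℂ) → ℂ) : Prop :=
  ∑ σ ∈ J.powerset, (∏ j ∈ σ, H j (w' j) (w j)) * F (swapOn σ w w') (swapOn σ w' w)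
    = ∑ σ ∈ J.powerset, (∏ j ∈ σ, H j (w' j) (w j)) * G (swapOn σ w w') (swapOn σ w' w)

/-- `P_R = Π_{j=M+1}^{ν−2} (w_j − q w_{j+1}')(q w_j' − w_{j+1})`. -/
noncomputable def PR (q : ℂ) (M ν : ℕ) (u u' : ℕ → ℂ) : ℂ :=
  ∏ j ∈ Finset.Ico (M + 1) (ν - 1), (u j - q * u' (j + 1)) * (q * u' j - u (j + 1))

/-- `S_R = 2^{−(ν−M−1)} Π_{j=M+1}^{ν−1} (w_j − q² w_j')(w_j' − w_j)`. -/
noncomputable def SR (q : ℂ) (M ν : ℕ) (u u' : ℕ → ℂ) : ℂ :=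
  (1 / 2 ^ (ν - M - 1)) * ∏ j ∈ Finset.Ico (M + 1) ν, (u j - q ^ 2 * u' j) * (u' j - u j)

/-!
Exchanging a single fermionic pair `(x, y) = (w_m, w_m')` is governed by
`H^f(y, x) (y − q² x) = q² y − x`. Summing over the exchange of the last pair of the chain, the
factor `(w_{m−1} − q w_m')(q w_{m−1}' − w_m)` of `P_R` together with the end factor
`w_m − q² w_m'` collapses to `(w_m − q² w_m')(w_m' − w_m)` times the end factor
`w_{m−1} − q² w_{m−1}'` of the shorter chain; the same happens at the first pair. Peeling pairs
off one end reduces each identity to a single pair, where a prefactor `G` contributes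
`G(x, y) − G(y, x)`. The weak sum of `S_R` factorizes over the pairs, each contributing
`2 (w_j − q² w_j')(w_j' − w_j)`.
-/

open Finset Function

noncomputable def weakSum (J : Finset ℕ) (H : ℕ → ℂ → ℂ → ℂ) (w w' : ℕ → ℂ)
    (F : (ℕ → ℂ) → (ℕ → ℂ) → ℂ) : ℂ :=
  ∑ σ ∈ J.powerset, (∏ j ∈ σ, H j (w' j) (w j)) * F (swapOn σ w w') (swapOn σ w' w)

section WeakSum

variable (J : Finset ℕ) (H : ℕ → ℂ → ℂ → ℂ) (w w' : ℕ → ℂ) (F : (ℕ → ℂ) → (ℕ → ℂ) → ℂ)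

theorem weakEq_iff (G : (ℕ → ℂ) → (ℕ → ℂ) → ℂ) :
    WeakEq J H w w' F G ↔ weakSum J H w w' F = weakSum J H w w' G :=
  Iff.rfl

theorem weakSum_const_mul (c : ℂ) :
    weakSum J H w w' (fun u u' => c * F u u') = c * weakSum J H w w' F := by
  simp only [weakSum, mul_sum]
  exact sum_congr rfl fun _ _ => by ring

theorem weakSum_neg : weakSum J H w w' (fun u u' => -F u u') = -weakSum J H w w' F := by
  simpa using weakSum_const_mul J H w w' F (-1)

theorem weakSum_zero : weakSum J H w w' (fun _ _ => 0) = 0 := by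
  simpa using weakSum_const_mul J H w w' (fun _ _ => 0) 0

theorem swapOn_empty : swapOn ∅ w w' = w := by
  funext j; simp [swapOn]

theorem swapOn_insert (σ : Finset ℕ) (m : ℕ) :
    swapOn (insert m σ) w w' = update (swapOn σ w w') m (w' m) := by
  funext j
  by_cases hj : j = m
  · subst hj; simp [swapOn]
  · simp [swapOn, hj]

theorem weakSum_insert {m : ℕ} (hm : m ∉ J) :
    weakSum (insert m J) H w w' F = weakSum J H w w' (fun u u' =>
      F (update u m (w m)) (update u' m (w' m)) +
        H m (w' m) (w m) * F (update u m (w' m)) (update u' m (w m))) := by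
  rw [weakSum, sum_powerset_insert hm, ← sum_add_distrib, weakSum]
  refine sum_congr rfl fun σ hσ => ?_
  have hmσ : m ∉ σ := fun h => hm (mem_powerset.mp hσ h)
  have hu : update (swapOn σ w w') m (w m) = swapOn σ w w' := by simp [swapOn, hmσ]
  have hu' : update (swapOn σ w' w) m (w' m) = swapOn σ w' w := by simp [swapOn, hmσ]
  rw [prod_insert hmσ, swapOn_insert, swapOn_insert, hu, hu']
  ring

theorem weakSum_singleton (m : ℕ) :
    weakSum {m} H w w' F =
      F w w' + H m (w' m) (w m) * F (update w m (w' m)) (update w' m (w m)) := by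
  rw [← insert_empty, weakSum_insert _ _ _ _ _ (notMem_empty m)]
  simp [weakSum, swapOn_empty]

theorem weakSum_prod (f : ℕ → ℂ → ℂ → ℂ) :
    weakSum J H w w' (fun u u' => ∏ j ∈ J, f j (u j) (u' j)) =
      ∏ j ∈ J, (f j (w j) (w' j) + H j (w' j) (w j) * f j (w' j) (w j)) := by
  induction J using Finset.induction_on with
  | empty => simp [weakSum]
  | insert m J hm ih =>
    have hupd : ∀ (u u' : ℕ → ℂ) (x y : ℂ),
        ∏ j ∈ insert m J, f j (update u m x j) (update u' m y j) =
          f m x y * ∏ j ∈ J, f j (u j) (u' j) := by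
      intro u u' x y
      rw [prod_insert hm, update_self, update_self]
      congr 1
      refine prod_congr rfl fun j hj => ?_
      have hjm : j ≠ m := ne_of_mem_of_not_mem hj hm
      rw [update_of_ne hjm, update_of_ne hjm]
    simp only [weakSum_insert _ _ _ _ _ hm, hupd, ← mul_assoc, ← add_mul]
    rw [weakSum_const_mul, ih, prod_insert hm]

end WeakSum

section Fermionic

variable (q : ℂ)

theorem Hf_mul_sub {x y : ℂ} (h : q ^ 2 * x ≠ y) : Hf q y x * (y - q ^ 2 * x) = q ^ 2 * y - x := by
  have h' : q ^ 2 * x - y ≠ 0 := sub_ne_zero.mpr h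
  unfold Hf
  field_simp
  ring

theorem exchange_single (G : ℂ → ℂ → ℂ) (c : ℂ) (hG : ∀ x y, G x y - G y x = c * (y - x))
    {x y : ℂ} (h : q ^ 2 * x ≠ y) :
    G x y * (x - q ^ 2 * y) + Hf q y x * (G y x * (y - q ^ 2 * x)) =
      c * ((x - q ^ 2 * y) * (y - x)) := by
  linear_combination G y x * Hf_mul_sub q h + (x - q ^ 2 * y) * hG x y

theorem exchange_last {x y : ℂ} (h : q ^ 2 * x ≠ y) (a b : ℂ) :
    (a - q * y) * (q * b - x) * (x - q ^ 2 * y) +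
        Hf q y x * ((a - q * x) * (q * b - y) * (y - q ^ 2 * x)) =
      (x - q ^ 2 * y) * (y - x) * (a - q ^ 2 * b) := by
  linear_combination (a - q * x) * (q * b - y) * Hf_mul_sub q h

theorem exchange_first {x y : ℂ} (h : q ^ 2 * x ≠ y) (a b : ℂ) :
    (x - q ^ 2 * y) * ((x - q * b) * (q * y - a)) +
        Hf q y x * ((y - q ^ 2 * x) * ((y - q * b) * (q * x - a))) =
      (x - q ^ 2 * y) * (y - x) * (a - q ^ 2 * b) := by
  linear_combination (y - q * b) * (q * x - a) * Hf_mul_sub q h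

theorem PR_update {M ν m : ℕ} (hm : m ≤ M ∨ ν ≤ m) (u u' : ℕ → ℂ) (a b : ℂ) :
    PR q M ν (update u m a) (update u' m b) = PR q M ν u u' := by
  refine prod_congr rfl fun j hj => ?_
  have hj' := mem_Ico.mp hj
  rw [update_of_ne (by omega), update_of_ne (by omega), update_of_ne (by omega),
    update_of_ne (by omega)]

theorem PR_add_two (M : ℕ) (u u' : ℕ → ℂ) : PR q M (M + 2) u u' = 1 := by
  simp [PR]

theorem PR_succ {M m : ℕ} (h : M + 2 ≤ m) (u u' : ℕ → ℂ) :
    PR q M (m + 1) u u' = PR q M m u u' * ((u (m - 1) - q * u' m) * (q * u' (m - 1) - u m)) := by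
  obtain ⟨k, rfl⟩ : ∃ k, m = k + 1 := ⟨m - 1, by omega⟩
  simp only [PR, Nat.add_sub_cancel]
  exact prod_Ico_succ_top (by omega) _

theorem PR_eq_mul_PR_succ {M ν : ℕ} (h : M + 3 ≤ ν) (u u' : ℕ → ℂ) :
    PR q M ν u u' =
      (u (M + 1) - q * u' (M + 2)) * (q * u' (M + 1) - u (M + 2)) * PR q (M + 1) ν u u' :=
  prod_eq_prod_Ico_succ_bot (by omega) _

theorem weakSum_SR {M ν : ℕ} (w w' : ℕ → ℂ)
    (hden : ∀ j ∈ Ico (M + 1) ν, q ^ 2 * w j ≠ w' j) :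
    weakSum (Ico (M + 1) ν) (fun _ => Hf q) w w' (SR q M ν) =
      ∏ j ∈ Ico (M + 1) ν, (w j - q ^ 2 * w' j) * (w' j - w j) := by
  have hpair : ∀ j ∈ Ico (M + 1) ν,
      (w j - q ^ 2 * w' j) * (w' j - w j) + Hf q (w' j) (w j) * ((w' j - q ^ 2 * w j) * (w j - w' j))
        = 2 * ((w j - q ^ 2 * w' j) * (w' j - w j)) := fun j hj => by
    linear_combination (w j - w' j) * Hf_mul_sub q (hden j hj)
  unfold SR
  rw [weakSum_const_mul, weakSum_prod _ _ _ _ fun _ x y => (x - q ^ 2 * y) * (y - x), prod_congr rfl hpair, prod_mul_distrib, prod_const,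
    Nat.card_Ico, show ν - (M + 1) = ν - M - 1 by omega]
  field_simp

variable (G : ℂ → ℂ → ℂ) (c : ℂ) (hG : ∀ x y, G x y - G y x = c * (y - x))
include hG

theorem weakSum_mul_PR_mul_last {M ν : ℕ} (hν : M + 2 ≤ ν) (w w' : ℕ → ℂ)
    (hden : ∀ j ∈ Ico (M + 1) ν, q ^ 2 * w j ≠ w' j) :
    weakSum (Ico (M + 1) ν) (fun _ => Hf q) w w' (fun u u' =>
        G (u (M + 1)) (u' (M + 1)) * PR q M ν u u' * (u (ν - 1) - q ^ 2 * u' (ν - 1))) =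
      c * ∏ j ∈ Ico (M + 1) ν, (w j - q ^ 2 * w' j) * (w' j - w j) := by
  induction ν, hν using Nat.le_induction with
  | base =>
    rw [Nat.Ico_succ_singleton, weakSum_singleton, prod_singleton]
    simp only [show M + 2 - 1 = M + 1 from rfl, update_self, PR_add_two, mul_one]
    exact exchange_single q G c hG (hden (M + 1) (by simp))
  | succ m hm ih =>
    have hmJ : m ∉ Ico (M + 1) m := by simp
    rw [Nat.Ico_succ_right_eq_insert_Ico (by omega)] at hden ⊢
    rw [weakSum_insert _ _ _ _ _ hmJ, prod_insert hmJ, Nat.add_sub_cancel]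
    calc _ = weakSum (Ico (M + 1) m) (fun _ => Hf q) w w' (fun u u' =>
          (w m - q ^ 2 * w' m) * (w' m - w m) *
            (G (u (M + 1)) (u' (M + 1)) * PR q M m u u' * (u (m - 1) - q ^ 2 * u' (m - 1)))) := by
          congr 1
          funext u u'
          simp only [update_self, update_of_ne (show M + 1 ≠ m by omega),
            update_of_ne (show m - 1 ≠ m by omega), PR_succ q hm, PR_update q (Or.inr le_rfl)]
          linear_combination G (u (M + 1)) (u' (M + 1)) * PR q M m u u' *
            exchange_last q (hden m (mem_insert_self _ _)) (u (m - 1)) (u' (m - 1))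
      _ = _ := by
          rw [weakSum_const_mul, ih fun j hj => hden j (mem_insert_of_mem hj)]
          ring

theorem weakSum_first_mul_PR_mul {M ν : ℕ} (hν : M + 2 ≤ ν) (w w' : ℕ → ℂ)
    (hden : ∀ j ∈ Ico (M + 1) ν, q ^ 2 * w j ≠ w' j) :
    weakSum (Ico (M + 1) ν) (fun _ => Hf q) w w' (fun u u' =>
        (u (M + 1) - q ^ 2 * u' (M + 1)) * PR q M ν u u' * G (u (ν - 1)) (u' (ν - 1))) =
      c * ∏ j ∈ Ico (M + 1) ν, (w j - q ^ 2 * w' j) * (w' j - w j) := by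
  obtain ⟨n, hn⟩ : ∃ n, ν = M + 2 + n := ⟨ν - (M + 2), by omega⟩
  induction n generalizing M with
  | zero =>
    subst hn
    rw [Nat.Ico_succ_singleton, weakSum_singleton, prod_singleton]
    simp only [show M + 2 + 0 - 1 = M + 1 from rfl, update_self, PR_add_two, mul_one]
    linear_combination exchange_single q G c hG (hden (M + 1) (by simp))
  | succ n ih =>
    have hJ : Ico (M + 1) ν = insert (M + 1) (Ico (M + 2) ν) :=
      (insert_Ico_add_one_left_eq_Ico (by omega)).symm
    have hMJ : M + 1 ∉ Ico (M + 2) ν := by simp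
    have ih' := ih (M := M + 1) (by omega) (fun j hj => hden j (by
      rw [hJ]; exact mem_insert_of_mem hj)) (by omega)
    rw [show M + 1 + 1 = M + 2 from rfl] at ih'
    rw [hJ] at hden ⊢
    rw [weakSum_insert _ _ _ _ _ hMJ, prod_insert hMJ]
    calc _ = weakSum (Ico (M + 2) ν) (fun _ => Hf q) w w' (fun u u' =>
          (w (M + 1) - q ^ 2 * w' (M + 1)) * (w' (M + 1) - w (M + 1)) *
            ((u (M + 2) - q ^ 2 * u' (M + 2)) * PR q (M + 1) ν u u' * G (u (ν - 1)) (u' (ν - 1)))) := by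
          congr 1
          funext u u'
          simp only [update_self, update_of_ne (show M + 2 ≠ M + 1 by omega),
            update_of_ne (show ν - 1 ≠ M + 1 by omega), PR_eq_mul_PR_succ q (show M + 3 ≤ ν by omega),
            PR_update q (Or.inl le_rfl)]
          linear_combination PR q (M + 1) ν u u' * G (u (ν - 1)) (u' (ν - 1)) *
            exchange_first q (hden (M + 1) (mem_insert_self _ _)) (u (M + 2)) (u' (M + 2))
      _ = _ := by
          rw [weakSum_const_mul, ih']
          ring

end Fermionic

theorem proposition3_second_general (M : ℕ)
    (ν : ℕ) (hν1 : M + 2 ≤ ν)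
    (q : ℂ) (w w' : ℕ → ℂ)
    (hden : ∀ j ∈ Finset.Ico (M + 1) ν, q ^ 2 * w j ≠ w' j) :
    WeakEq (Finset.Ico (M + 1) ν) (fun _ => Hf q) w w'
      (fun u u' => PR q M ν u u' * (u (ν - 1) - q ^ 2 * u' (ν - 1))) (fun _ _ => 0) ∧
    WeakEq (Finset.Ico (M + 1) ν) (fun _ => Hf q) w w'
      (fun u u' => u (M + 1) * PR q M ν u u' * (u (ν - 1) - q ^ 2 * u' (ν - 1)))
      (fun u u' => -SR q M ν u u') ∧
    WeakEq (Finset.Ico (M + 1) ν) (fun _ => Hf q) w w'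
      (fun u u' => u' (M + 1) * PR q M ν u u' * (u (ν - 1) - q ^ 2 * u' (ν - 1)))
      (fun u u' => SR q M ν u u') ∧
    WeakEq (Finset.Ico (M + 1) ν) (fun _ => Hf q) w w'
      (fun u u' => (u (M + 1) - q ^ 2 * u' (M + 1)) * PR q M ν u u') (fun _ _ => 0) ∧
    WeakEq (Finset.Ico (M + 1) ν) (fun _ => Hf q) w w'
      (fun u u' => (u (M + 1) - q ^ 2 * u' (M + 1)) * PR q M ν u u' * u (ν - 1))
      (fun u u' => -SR q M ν u u') ∧
    WeakEq (Finset.Ico (M + 1) ν) (fun _ => Hf q) w w'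
      (fun u u' => (u (M + 1) - q ^ 2 * u' (M + 1)) * PR q M ν u u' * u' (ν - 1))
      (fun u u' => SR q M ν u u') := by
  have last G c hG := weakSum_mul_PR_mul_last q G c hG hν1 w w' hden
  have first G c hG := weakSum_first_mul_PR_mul q G c hG hν1 w w' hden
  simp only [weakEq_iff, weakSum_neg, weakSum_zero, weakSum_SR q w w' hden]
  refine ⟨?_, ?_, ?_, ?_, ?_, ?_⟩
  · simpa using last (fun _ _ => 1) 0 (by simp)
  · simpa using last (fun x _ => x) (-1) (fun x y => by ring)
  · simpa using last (fun _ y => y) 1 (fun x y => by ring)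
  · simpa using first (fun _ _ => 1) 0 (by simp)
  · simpa using first (fun x _ => x) (-1) (fun x y => by ring)
  · simpa using first (fun _ y => y) 1 (fun x y => by ring)

/-- Proposition 3, second group: six weak equalities for the fermionic pairs
`(w_{M+1}, w_{M+1}'), …, (w_{ν−1}, w_{ν−1}')`. -/
theorem proposition3_second (M N : ℕ) (hM : 1 ≤ M) (hN : 2 ≤ N)
    (ν : ℕ) (hν1 : M + 2 ≤ ν) (hν2 : ν ≤ M + N)
    (q : ℂ) (hq : q ≠ 0) (hq2 : q ^ 2 ≠ 1) (w w' : ℕ → ℂ)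
    (hden : ∀ j ∈ Finset.Ico (M + 1) ν, q ^ 2 * w j ≠ w' j) :
    WeakEq (Finset.Ico (M + 1) ν) (fun _ => Hf q) w w'
      (fun u u' => PR q M ν u u' * (u (ν - 1) - q ^ 2 * u' (ν - 1))) (fun _ _ => 0) ∧
    WeakEq (Finset.Ico (M + 1) ν) (fun _ => Hf q) w w'
      (fun u u' => u (M + 1) * PR q M ν u u' * (u (ν - 1) - q ^ 2 * u' (ν - 1)))
      (fun u u' => -SR q M ν u u') ∧
    WeakEq (Finset.Ico (M + 1) ν) (fun _ => Hf q) w w'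
      (fun u u' => u' (M + 1) * PR q M ν u u' * (u (ν - 1) - q ^ 2 * u' (ν - 1)))
      (fun u u' => SR q M ν u u') ∧
    WeakEq (Finset.Ico (M + 1) ν) (fun _ => Hf q) w w'
      (fun u u' => (u (M + 1) - q ^ 2 * u' (M + 1)) * PR q M ν u u') (fun _ _ => 0) ∧
    WeakEq (Finset.Ico (M + 1) ν) (fun _ => Hf q) w w'
      (fun u u' => (u (M + 1) - q ^ 2 * u' (M + 1)) * PR q M ν u u' * u (ν - 1))
      (fun u u' => -SR q M ν u u') ∧
    WeakEq (Finset.Ico (M + 1) ν) (fun _ => Hf q) w w'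
      (fun u u' => (u (M + 1) - q ^ 2 * u' (M + 1)) * PR q M ν u u' * u' (ν - 1))
      (fun u u' => SR q M ν u u') :=
  proposition3_second_general M ν hν1 q w w' hden
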